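/- arXiv:1710.08568 — 3 statements merged into one kernel-verified Lean document; each statement's English description precedes it below -/
import Mathlib

section
/- One-dimensional version of the equidistribution lemma: if α > 0 and r/α is irrational, then for any continuous compactly supported f : ℝ → ℝ, (1/N) Σ_{n=1}^N Σ_{k∈ℤ} f(αk - nr) · α converges as N → ∞ to ∫_ℝ f(x) dx. -/
/-!
Periodizing `f` along `αℤ` gives a continuous function `F` on the circle `ℝ/αℤ` whose Haar
integral is `α⁻¹ ∫ f`, and the inner sum `∑ₖ f (αk - nr)` is `F (n • y)` for `y = -r mod α`.
Since `r/α` is irrational, `y` has infinite order, so no nontrivial character is trivial at `y`: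
the Birkhoff averages of a character along `x ↦ x + y` are geometric averages, which tend to `0`,
its integral. Averages and integral are `1`-Lipschitz in the sup norm, so the functions for
which the averages converge to the integral form a closed subspace; it contains the
trigonometric polynomials, which are dense (Weyl's equidistribution theorem).
-/

open MeasureTheory Filter Topology BoundedContinuousFunction

section GeometricAverage

variable {𝕜 : Type*} [RCLike 𝕜]

lemma tendsto_inv_mul_geom_sum_of_norm_le_one {z : 𝕜} (hz : ‖z‖ ≤ 1) (hz1 : z ≠ 1) :
    Tendsto (fun N : ℕ => (N : 𝕜)⁻¹ * ∑ k ∈ Finset.range N, z ^ k) atTop (𝓝 0) := by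
  have hbound (N : ℕ) : ‖∑ k ∈ Finset.range N, z ^ k‖ ≤ 2 / ‖z - 1‖ := by
    rw [geom_sum_eq hz1, norm_div]
    gcongr
    calc ‖z ^ N - 1‖ ≤ ‖z‖ ^ N + ‖(1 : 𝕜)‖ := by simpa using norm_sub_le (z ^ N) 1
      _ ≤ 2 := by rw [norm_one]; linarith [pow_le_one₀ (n := N) (norm_nonneg z) hz]
  refine squeeze_zero_norm (fun N => ?_) (tendsto_const_div_atTop_nhds_zero_nat (2 / ‖z - 1‖))
  rw [norm_mul, norm_inv, RCLike.norm_natCast, inv_mul_eq_div]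
  gcongr
  exact hbound N

end GeometricAverage

section BirkhoffAverage

lemma birkhoffSum_add_apply_self {M E : Type*} [AddMonoid M] [AddCommMonoid E] (g : M → E)
    (y : M) (N : ℕ) : birkhoffSum (· + y) g N y = ∑ n ∈ Finset.Icc 1 N, g (n • y) := by
  rw [birkhoffSum, ← Finset.Ico_add_one_right_eq_Icc, Finset.sum_Ico_eq_sum_range,
    Nat.add_sub_cancel]
  simp [add_right_iterate_apply, add_nsmul]

variable {X 𝕜 E : Type*} [TopologicalSpace X] [CompactSpace X] [RCLike 𝕜]

lemma dist_birkhoffAverage_le_dist [NormedAddCommGroup E] [NormedSpace 𝕜 E] (f : X → X)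
    (G H : C(X, E)) (n : ℕ) (x : X) :
    dist (birkhoffAverage 𝕜 f G n x) (birkhoffAverage 𝕜 f H n x) ≤ dist G H := by
  rcases eq_or_ne n 0 with rfl | hn
  · simp [dist_nonneg]
  calc dist (birkhoffAverage 𝕜 f G n x) (birkhoffAverage 𝕜 f H n x)
      ≤ (n : ℝ)⁻¹ * ∑ _k ∈ Finset.range n, dist G H := by
        simp only [birkhoffAverage, birkhoffSum, dist_smul₀, norm_inv, RCLike.norm_natCast]
        gcongr
        exact (dist_sum_sum_le _ _ _).trans
          (Finset.sum_le_sum fun k _ => ContinuousMap.dist_apply_le_dist _)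
    _ = dist G H := by simp [hn]

variable [MeasurableSpace X] [OpensMeasurableSpace X]

lemma isClosed_setOf_tendsto_birkhoffAverage_integral (μ : Measure X) [IsProbabilityMeasure μ]
    (f : X → X) (x : X) :
    IsClosed {G : C(X, 𝕜) | Tendsto (birkhoffAverage 𝕜 f G · x) atTop (𝓝 (∫ z, G z ∂μ))} := by
  refine Equicontinuous.isClosed_setOfPred_tendsto
    (F := fun n (G : C(X, 𝕜)) => birkhoffAverage 𝕜 f G n x) ?_ ?_
  · refine (LipschitzWith.uniformEquicontinuous _ 1 fun n => ?_).equicontinuous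
    exact LipschitzWith.of_dist_le_mul fun G H => by
      simpa using dist_birkhoffAverage_le_dist f G H n x
  · refine (LipschitzWith.of_dist_le_mul (K := 1) fun G H => ?_).continuous
    have hint (G : C(X, 𝕜)) : Integrable G μ := (mkOfCompact G).integrable μ
    rw [dist_eq_norm, ← integral_sub (hint G) (hint H), NNReal.coe_one, one_mul, dist_eq_norm]
    simpa only [mkOfCompact_apply, norm_mkOfCompact, ContinuousMap.sub_apply] using
      (mkOfCompact (G - H)).norm_integral_le_norm μ

end BirkhoffAverage

namespace AddCircle

variable {T : ℝ}

lemma fourier_add_nsmul (m : ℤ) (x y : AddCircle T) (k : ℕ) :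
    fourier m (x + k • y) = fourier m x * fourier m y ^ k := by
  induction k with
  | zero => simp
  | succ k ih =>
    rw [succ_nsmul, ← add_assoc, pow_succ, ← mul_assoc, ← ih]
    simp only [fourier_apply, smul_add, toCircle_add, Circle.coe_mul]

variable [hT : Fact (0 < T)] {y : AddCircle T}

lemma fourier_ne_one_of_not_isOfFinAddOrder (hy : ¬IsOfFinAddOrder y) {m : ℤ} (hm : m ≠ 0) :
    fourier m y ≠ 1 := by
  intro h
  refine hy (isOfFinAddOrder_iff_zsmul_eq_zero.mpr ⟨m, hm, injective_toCircle hT.out.ne' ?_⟩)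
  ext
  simpa using h

lemma tendsto_birkhoffAverage_fourier (hy : ¬IsOfFinAddOrder y) (m : ℤ) (x : AddCircle T) :
    Tendsto (birkhoffAverage ℂ (· + y) (fourier m) · x) atTop
      (𝓝 (∫ z : AddCircle T, fourier m z ∂haarAddCircle)) := by
  rcases eq_or_ne m 0 with rfl | hm
  · have h1 : ⇑(fourier 0 : C(AddCircle T, ℂ)) = 1 := funext fun _ => fourier_zero
    refine tendsto_const_nhds.congr' ((eventually_ne_atTop 0).mono fun N hN => ?_)
    simp [h1, birkhoffAverage_of_comp_eq ℂ (f := (· + y)) (g := (1 : AddCircle T → ℂ)) rfl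
      (Nat.cast_ne_zero.mpr hN)]
  · have hzero : ∫ z, fourier m z ∂haarAddCircle = 0 :=
      integral_eq_zero_of_add_right_eq_neg (fourier_add_half_inv_index (T := T) hm hT.out)
    have havg (N : ℕ) : birkhoffAverage ℂ (· + y) (fourier m) N x =
        fourier m x * ((N : ℂ)⁻¹ * ∑ k ∈ Finset.range N, fourier m y ^ k) := by
      simp only [birkhoffAverage, birkhoffSum, add_right_iterate_apply, fourier_add_nsmul,
        smul_eq_mul, ← Finset.mul_sum]
      ring
    rw [hzero, funext havg, ← mul_zero (fourier m x)]
    refine (tendsto_inv_mul_geom_sum_of_norm_le_one ?_ ?_).const_mul _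
    · exact (Circle.norm_coe _).le
    · exact fourier_ne_one_of_not_isOfFinAddOrder hy hm

theorem tendsto_birkhoffAverage_add_integral (hy : ¬IsOfFinAddOrder y) (G : C(AddCircle T, ℂ))
    (x : AddCircle T) :
    Tendsto (birkhoffAverage ℂ (· + y) G · x) atTop (𝓝 (∫ z, G z ∂haarAddCircle)) := by
  set S := {G : C(AddCircle T, ℂ) |
    Tendsto (birkhoffAverage ℂ (· + y) G · x) atTop (𝓝 (∫ z, G z ∂haarAddCircle))}
  have hint (G : C(AddCircle T, ℂ)) : Integrable G haarAddCircle :=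
    (mkOfCompact G).integrable _
  have hspan : (Submodule.span ℂ (Set.range (fourier (T := T))) : Set C(AddCircle T, ℂ)) ⊆ S := by
    intro G hG
    induction hG using Submodule.span_induction with
    | mem G hG =>
      obtain ⟨m, rfl⟩ := hG
      exact tendsto_birkhoffAverage_fourier hy m x
    | zero => simp [S, birkhoffAverage, birkhoffSum]
    | add G H _ _ hG hH =>
      simpa [S, birkhoffAverage_add, integral_add (hint G) (hint H)] using hG.add hH
    | smul c G _ hG =>
      simpa [S, birkhoffAverage, birkhoffSum, Finset.mul_sum, mul_left_comm, integral_const_mul]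
        using hG.const_mul c
  have hclosure := (isClosed_setOf_tendsto_birkhoffAverage_integral haarAddCircle (· + y)
    x).closure_subset_iff.mpr hspan
  rw [← Submodule.topologicalClosure_coe, span_fourier_closure_eq_top] at hclosure
  exact hclosure (Set.mem_univ G)

theorem tendsto_birkhoffAverage_add_integral_real (hy : ¬IsOfFinAddOrder y)
    (G : C(AddCircle T, ℝ)) (x : AddCircle T) :
    Tendsto (birkhoffAverage ℝ (· + y) G · x) atTop (𝓝 (∫ z, G z ∂haarAddCircle)) := by
  have h := tendsto_birkhoffAverage_add_integral hy ⟨fun z => (G z : ℂ), by fun_prop⟩ x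
  refine tendsto_ofReal_iff.mp ?_
  convert h using 2 with N
  · exact map_birkhoffAverage ℝ ℂ Complex.ofRealHom _ _ N x
  · exact integral_ofReal.symm

end AddCircle

lemma MeasureTheory.Integrable.hasSum_intervalIntegral_comp_add_zsmul {E : Type*}
    [NormedAddCommGroup E] [NormedSpace ℝ E] {f : ℝ → E} (hf : Integrable f) {T : ℝ}
    (hT : 0 < T) : HasSum (fun n : ℤ => ∫ x in (0 : ℝ)..T, f (x + n • T)) (∫ x, f x) := by
  have h := hasSum_integral_iUnion (fun _ => measurableSet_Ioc)
    (Set.pairwise_disjoint_Ioc_add_zsmul 0 T) hf.integrableOn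
  rw [iUnion_Ioc_add_zsmul hT 0, setIntegral_univ] at h
  convert h using 2 with n
  rw [intervalIntegral.integral_comp_add_right, intervalIntegral.integral_of_le (by linarith),
    zero_add, zero_add, add_zsmul, one_zsmul, add_comm T]

namespace ContinuousMap

variable {E : Type*} [NormedAddCommGroup E] {f : C(ℝ, E)} {T : ℝ}

lemma summable_norm_restrict_comp_addRight_zsmul (hf : HasCompactSupport f) (hT : T ≠ 0)
    (K : TopologicalSpace.Compacts ℝ) :
    Summable fun n : ℤ => ‖(f.comp (ContinuousMap.addRight (n • T))).restrict K‖ := by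
  -- only the finitely many `n` with `n • T ∈ tsupport f - K` contribute
  have hC := (hf.prod K.isCompact).image continuous_sub
  apply summable_of_hasFiniteSupport
  refine (mem_cofinite.mp (Int.tendsto_zmultiplesHom_cofinite hT hC.compl_mem_cocompact)).subset
    fun n hn => ?_
  simp only [Set.mem_compl_iff, Set.mem_preimage, not_not, zmultiplesHom_apply]
  by_contra hnC
  refine hn (norm_eq_zero.mpr (ext fun x => ?_))
  exact image_eq_zero_of_notMem_tsupport (f := ⇑f) fun hx =>
    hnC ⟨(x + n • T, x), ⟨hx, x.2⟩, by simp⟩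

noncomputable def periodize (T : ℝ) (f : C(ℝ, E)) : C(AddCircle T, E) :=
  ⟨(f.periodic_tsum_comp_add_zsmul T).lift, continuous_coinduced_dom.mpr (map_continuous _)⟩

variable [CompleteSpace E]

lemma periodize_coe (hf : HasCompactSupport f) (hT : T ≠ 0) (x : ℝ) :
    f.periodize T x = ∑' n : ℤ, f (x + n • T) :=
  (tsum_apply (summable_of_locally_summable_norm
    (summable_norm_restrict_comp_addRight_zsmul hf hT)) x).symm

lemma integral_periodize [NormedSpace ℝ E] [hT : Fact (0 < T)] (hf : HasCompactSupport f) :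
    ∫ z, f.periodize T z ∂AddCircle.haarAddCircle = T⁻¹ • ∫ x, f x := by
  calc ∫ z, f.periodize T z ∂AddCircle.haarAddCircle
      = T⁻¹ • ∫ x in (0 : ℝ)..T, ∑' n : ℤ, f (x + n • T) := by
        rw [AddCircle.integral_haarAddCircle, ← AddCircle.intervalIntegral_preimage T 0, zero_add]
        simp_rw [periodize_coe hf hT.out.ne']
    _ = T⁻¹ • ∑' n : ℤ, ∫ x in (0 : ℝ)..T, f (x + n • T) := by
        congr 1
        exact (intervalIntegral.tsum_intervalIntegral_eq_of_summable_norm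
          (f := fun n : ℤ => f.comp (ContinuousMap.addRight (n • T)))
          (summable_norm_restrict_comp_addRight_zsmul hf hT.out.ne' _)).symm
    _ = T⁻¹ • ∫ x, f x := by
        rw [((map_continuous f).integrable_of_hasCompactSupport
          hf).hasSum_intervalIntegral_comp_add_zsmul hT.out |>.tsum_eq]

end ContinuousMap

/-- One-dimensional equidistribution: if `r/α` is irrational, then
`(1/N) Σ_{n=1}^N Σ_{k∈ℤ} f(αk - nr)·α → ∫_ℝ f` for continuous compactly
supported `f`. -/
theorem weyl_lattice_translates_equidistribute
    (α r : ℝ) (hα : 0 < α) (hirr : Irrational (r / α))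
    (f : ℝ → ℝ) (hf : Continuous f) (hsupp : HasCompactSupport f) :
    Tendsto (fun N : ℕ =>
        (1 / (N : ℝ)) * ∑ n ∈ Finset.Icc 1 N, ∑' k : ℤ, f (α * k - n * r) * α)
      atTop (nhds (∫ x : ℝ, f x)) := by
  have : Fact (0 < α) := ⟨hα⟩
  set y : AddCircle α := ↑(-r)
  have hy : ¬IsOfFinAddOrder y := AddCircle.not_isOfFinAddOrder_iff_forall_rat_ne_div.mpr
    fun q => by rw [neg_div]; exact (hirr.neg.ne_rat q).symm
  set F := ContinuousMap.periodize α ⟨f, hf⟩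
  have hF (n : ℕ) : F (n • y) = ∑' k : ℤ, f (α * k - n * r) := by
    rw [← AddCircle.coe_nsmul, ContinuousMap.periodize_coe hsupp hα.ne']
    refine tsum_congr fun k => ?_
    simp only [ContinuousMap.coe_mk, nsmul_eq_mul, zsmul_eq_mul]
    congr 1
    ring
  have hlim := (AddCircle.tendsto_birkhoffAverage_add_integral_real hy F y).const_mul α
  rw [ContinuousMap.integral_periodize (f := ⟨f, hf⟩) hsupp, smul_eq_mul,
    mul_inv_cancel_left₀ hα.ne'] at hlim
  refine hlim.congr fun N => ?_
  simp only [birkhoffAverage, birkhoffSum_add_apply_self, hF, smul_eq_mul, tsum_mul_right,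
    ← Finset.sum_mul]
  ring
end

section
/- Summation estimate used for S₃ in the proof of Proposition 4.5: if r_k ≥ 1 and p_k ≥ 0 with Σ_k p_k ≤ 1 and Σ_{k: r_k ≥ n} p_k ≤ C n^{-β} for all n ≥ 1 with β > 3, then Σ_{k: r_k ≥ M} Σ_{l: r_l ≥ M} r_k r_l (r_k + r_l) p_k p_l ≤ C' M^{3 - 2β} for all M ≥ 1. -/
open Real

private lemma tail_moment
    (r : ℕ → ℕ) (p : ℕ → ℝ) (hp : ∀ k, 0 ≤ p k) (hsum : Summable p)
    (C β : ℝ) (hC : 0 < C)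
    (htail : ∀ n : ℕ, 1 ≤ n →
      (∑' k, if (n : ℝ) ≤ (r k : ℝ) then p k else 0) ≤ C * (n : ℝ) ^ (-β))
    (a : ℕ) (ha : (a : ℝ) < β) (M : ℕ) (hM : 1 ≤ M) :
    Summable (fun k => if (M : ℝ) ≤ (r k : ℝ) then (r k : ℝ) ^ a * p k else 0) ∧
    (∑' k, if (M : ℝ) ≤ (r k : ℝ) then (r k : ℝ) ^ a * p k else 0)
      ≤ (C * 2 ^ a / (1 - 2 ^ ((a : ℝ) - β))) * (M : ℝ) ^ ((a : ℝ) - β) := by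
  have hM0 : (0:ℝ) < M := by exact_mod_cast hM
  have h2p : (0:ℝ) < 2 := by norm_num
  set x : ℝ := (2:ℝ) ^ ((a : ℝ) - β) with hxdef
  have hx0 : 0 < x := Real.rpow_pos_of_pos (by norm_num) _
  have hx1 : x < 1 := by
    rw [hxdef]
    calc (2:ℝ) ^ ((a:ℝ) - β) < (2:ℝ) ^ (0:ℝ) := by
          exact Real.rpow_lt_rpow_left_iff (by norm_num) |>.mpr (by linarith)
      _ = 1 := Real.rpow_zero 2
  set F : ℕ → ℕ → ℝ := fun j k =>
    if ((2 ^ j * M : ℕ) : ℝ) ≤ (r k : ℝ) then ((2:ℝ) ^ (j+1) * M) ^ a * p k else 0 with hFdef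
  have hF0 : ∀ j k, 0 ≤ F j k := by
    intro j k
    by_cases h : ((2 ^ j * M : ℕ) : ℝ) ≤ (r k : ℝ)
    · simp only [hFdef, if_pos h]
      exact mul_nonneg (by positivity) (hp k)
    · simp only [hFdef, if_neg h]; exact le_rfl
  -- summability of indicator tails
  have hind : ∀ n : ℕ, Summable (fun k => if (n : ℝ) ≤ (r k : ℝ) then p k else 0) := by
    intro n
    apply Summable.of_nonneg_of_le _ _ hsum
    · intro k; split
      · exact hp k
      · exact le_rfl
    · intro k; split
      · exact le_rfl
      · exact hp k
  -- summability of slices in k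
  have hFk : ∀ j, Summable (F j) := by
    intro j
    have : F j = fun k => ((2:ℝ) ^ (j+1) * M) ^ a *
        (if ((2 ^ j * M : ℕ) : ℝ) ≤ (r k : ℝ) then p k else 0) := by
      funext k
      by_cases h : ((2 ^ j * M : ℕ) : ℝ) ≤ (r k : ℝ)
      · simp only [hFdef, if_pos h]
      · simp only [hFdef, if_neg h, mul_zero]
    rw [this]
    exact (hind _).mul_left _
  -- slice sum bound
  have hslice : ∀ j, ∑' k, F j k ≤ (C * 2 ^ a * (M:ℝ) ^ ((a:ℝ) - β)) * x ^ j := by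
    intro j
    have h1 : ∑' k, F j k = ((2:ℝ) ^ (j+1) * M) ^ a *
        ∑' k, (if ((2 ^ j * M : ℕ) : ℝ) ≤ (r k : ℝ) then p k else 0) := by
      rw [← tsum_mul_left]
      congr 1; funext k
      by_cases h : ((2 ^ j * M : ℕ) : ℝ) ≤ (r k : ℝ)
      · simp only [hFdef, if_pos h]
      · simp only [hFdef, if_neg h, mul_zero]
    have h2 : ∑' k, (if ((2 ^ j * M : ℕ) : ℝ) ≤ (r k : ℝ) then p k else 0)
        ≤ C * ((2 ^ j * M : ℕ) : ℝ) ^ (-β) := by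
      apply htail
      have : 0 < 2 ^ j * M := by positivity
      omega
    have h3 : ∑' k, F j k ≤ ((2:ℝ) ^ (j+1) * M) ^ a * (C * ((2 ^ j * M : ℕ) : ℝ) ^ (-β)) := by
      rw [h1]
      exact mul_le_mul_of_nonneg_left h2 (by positivity)
    refine h3.trans_eq ?_
    have e1 : ((2 ^ j * M : ℕ) : ℝ) ^ (-β) = (2:ℝ) ^ ((j:ℝ) * -β) * (M:ℝ) ^ (-β) := by
      push_cast
      rw [Real.mul_rpow (by positivity) (by positivity), ← Real.rpow_natCast (2:ℝ) j,
        ← Real.rpow_mul h2p.le]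
    have e2 : ((2:ℝ) ^ (j+1) * (M:ℝ)) ^ a
        = (2:ℝ) ^ (((j:ℝ)+1) * (a:ℝ)) * (M:ℝ) ^ ((a:ℝ)) := by
      rw [mul_pow, ← Real.rpow_natCast ((2:ℝ)^(j+1)) a, ← Real.rpow_natCast (2:ℝ) (j+1),
        ← Real.rpow_mul h2p.le, ← Real.rpow_natCast (M:ℝ) a]
      push_cast
      ring_nf
    have e3 : x ^ j = (2:ℝ) ^ (((a:ℝ) - β) * (j:ℝ)) := by
      rw [hxdef, ← Real.rpow_natCast ((2:ℝ) ^ ((a:ℝ) - β)) j, ← Real.rpow_mul h2p.le]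
    rw [e1, e2, e3]
    calc (2:ℝ) ^ (((j:ℝ)+1) * (a:ℝ)) * (M:ℝ) ^ ((a:ℝ))
          * (C * ((2:ℝ) ^ ((j:ℝ) * -β) * (M:ℝ) ^ (-β)))
        = C * ((2:ℝ) ^ (((j:ℝ)+1) * (a:ℝ)) * (2:ℝ) ^ ((j:ℝ) * -β))
          * ((M:ℝ) ^ ((a:ℝ)) * (M:ℝ) ^ (-β)) := by ring
      _ = C * (2:ℝ) ^ (((j:ℝ)+1) * (a:ℝ) + (j:ℝ) * -β) * (M:ℝ) ^ ((a:ℝ) + -β) := by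
          rw [← Real.rpow_add h2p, ← Real.rpow_add hM0]
      _ = C * (2:ℝ) ^ ((a:ℝ) + ((a:ℝ) - β) * (j:ℝ)) * (M:ℝ) ^ ((a:ℝ) - β) := by
          rw [show ((j:ℝ)+1) * (a:ℝ) + (j:ℝ) * -β = (a:ℝ) + ((a:ℝ) - β) * (j:ℝ) from by ring,
            show (a:ℝ) + -β = (a:ℝ) - β from by ring]
      _ = C * ((2:ℝ) ^ ((a:ℝ)) * (2:ℝ) ^ (((a:ℝ) - β) * (j:ℝ))) * (M:ℝ) ^ ((a:ℝ) - β) := by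
          rw [← Real.rpow_add h2p]
      _ = C * 2 ^ a * (M:ℝ) ^ ((a:ℝ) - β) * (2:ℝ) ^ (((a:ℝ) - β) * (j:ℝ)) := by
          rw [Real.rpow_natCast]; ring
  -- summability of the slice-sum function in j
  have hgeom : Summable (fun j : ℕ => (C * 2 ^ a * (M:ℝ) ^ ((a:ℝ) - β)) * x ^ j) :=
    (summable_geometric_of_lt_one hx0.le hx1).mul_left _
  have hFj : Summable (fun j => ∑' k, F j k) :=
    Summable.of_nonneg_of_le (fun j => tsum_nonneg (fun k => hF0 j k)) hslice hgeom
  have hFsum : Summable (Function.uncurry F) := by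
    rw [show Function.uncurry F = fun q : ℕ × ℕ => F q.1 q.2 from rfl]
    exact (summable_prod_of_nonneg (fun q => hF0 q.1 q.2)).mpr ⟨fun j => hFk j, hFj⟩
  -- summability of j-slices for fixed k (finite support)
  have hjk : ∀ k, Summable (fun j => F j k) := by
    intro k
    apply summable_of_ne_finset_zero (s := Finset.range (r k + 1))
    intro j hj
    simp only [Finset.mem_range, not_lt] at hj
    have h1 : r k < 2 ^ j * M := by
      have h2 : j < 2 ^ j := j.lt_two_pow_self
      have : 2 ^ j ≤ 2 ^ j * M := Nat.le_mul_of_pos_right _ (by omega)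
      omega
    have h1' : ¬ ((2 ^ j * M : ℕ) : ℝ) ≤ (r k : ℝ) := by
      push_neg; exact_mod_cast h1
    simp only [hFdef]
    exact if_neg h1'
  -- pointwise bound
  have hpt : ∀ k, (if (M:ℝ) ≤ (r k:ℝ) then (r k:ℝ) ^ a * p k else 0) ≤ ∑' j, F j k := by
    intro k
    by_cases hk : (M:ℝ) ≤ (r k:ℝ)
    · rw [if_pos hk]
      have hkM : M ≤ r k := by exact_mod_cast hk
      set q := r k / M with hq
      set J := Nat.log 2 q with hJ
      have hq1 : 1 ≤ q := (Nat.one_le_div_iff (by omega)).mpr hkM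
      have h1 : 2 ^ J * M ≤ r k := by
        calc 2 ^ J * M ≤ q * M := Nat.mul_le_mul_right M (Nat.pow_log_le_self 2 (by omega))
          _ ≤ r k := by rw [hq]; exact Nat.div_mul_le_self _ _
      have h2 : r k < 2 ^ (J+1) * M := by
        have hqlt : q < 2 ^ (J+1) := Nat.lt_pow_succ_log_self (by norm_num) q
        have hmod : r k % M < M := Nat.mod_lt _ (by omega)
        have hdm : M * q + r k % M = r k := by rw [hq]; exact Nat.div_add_mod (r k) M
        have hstep : r k < (q + 1) * M := by
          have he : (q + 1) * M = M * q + M := by ring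
          omega
        calc r k < (q + 1) * M := hstep
          _ ≤ 2 ^ (J+1) * M := Nat.mul_le_mul_right M hqlt
      have hcond : ((2 ^ J * M : ℕ) : ℝ) ≤ (r k : ℝ) := by exact_mod_cast h1
      have hbd : (r k:ℝ) ^ a * p k ≤ F J k := by
        simp only [hFdef, if_pos hcond]
        apply mul_le_mul_of_nonneg_right _ (hp k)
        apply pow_le_pow_left₀ (by positivity)
        have h2' : (r k : ℝ) ≤ ((2 ^ (J+1) * M : ℕ) : ℝ) := by exact_mod_cast h2.le
        push_cast at h2' ⊢
        linarith
      exact hbd.trans (Summable.le_tsum (hjk k) J (fun j _ => hF0 j k))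
    · rw [if_neg hk]; exact tsum_nonneg fun j => hF0 j k
  -- summability of the target
  have hmaj : Summable (fun k => ∑' j, F j k) := by
    have hswap : Summable (fun q : ℕ × ℕ => Function.uncurry F q.swap) := hFsum.prod_symm
    exact ((summable_prod_of_nonneg (f := fun q : ℕ × ℕ => Function.uncurry F q.swap)
      (fun q => hF0 q.2 q.1)).mp hswap).2
  have htarget : Summable (fun k => if (M:ℝ) ≤ (r k:ℝ) then (r k:ℝ) ^ a * p k else 0) := by
    apply Summable.of_nonneg_of_le _ hpt hmaj
    intro k; split
    · exact mul_nonneg (by positivity) (hp k)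
    · exact le_rfl
  refine ⟨htarget, ?_⟩
  calc (∑' k, if (M:ℝ) ≤ (r k:ℝ) then (r k:ℝ) ^ a * p k else 0)
      ≤ ∑' k, ∑' j, F j k := Summable.tsum_le_tsum hpt htarget hmaj
    _ = ∑' j, ∑' k, F j k := Summable.tsum_comm' hFsum hFk hjk
    _ ≤ ∑' j : ℕ, (C * 2 ^ a * (M:ℝ) ^ ((a:ℝ) - β)) * x ^ j := Summable.tsum_le_tsum hslice hFj hgeom
    _ = (C * 2 ^ a * (M:ℝ) ^ ((a:ℝ) - β)) * (1 - x)⁻¹ := by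
        rw [tsum_mul_left, tsum_geometric_of_lt_one hx0.le hx1]
    _ = (C * 2 ^ a / (1 - x)) * (M:ℝ) ^ ((a:ℝ) - β) := by ring

/-- Summation estimate for `S₃`: under the tail bound
`Σ_{k: r_k ≥ n} p_k ≤ C n^{-β}` with `β > 3`, the double sum
`Σ_{r_k ≥ M} Σ_{r_l ≥ M} r_k r_l (r_k + r_l) p_k p_l` is `O(M^{3-2β})`. -/
theorem double_tail_sum_estimate
    (r : ℕ → ℕ) (hr : ∀ k, 1 ≤ r k)
    (p : ℕ → ℝ) (hp : ∀ k, 0 ≤ p k) (hsum : Summable p) (hp1 : ∑' k, p k ≤ 1)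
    (C β : ℝ) (hC : 0 < C) (hβ : 3 < β)
    (htail : ∀ n : ℕ, 1 ≤ n →
      (∑' k, if (n : ℝ) ≤ (r k : ℝ) then p k else 0) ≤ C * (n : ℝ) ^ (-β)) :
    ∃ C' : ℝ, 0 < C' ∧ ∀ M : ℕ, 1 ≤ M →
      (∑' k, ∑' l, if (M : ℝ) ≤ (r k : ℝ) ∧ (M : ℝ) ≤ (r l : ℝ) then
          (r k : ℝ) * (r l : ℝ) * ((r k : ℝ) + (r l : ℝ)) * p k * p l else 0)
        ≤ C' * (M : ℝ) ^ (3 - 2 * β) := by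
  have hx1 : (2:ℝ) ^ ((1:ℝ) - β) < 1 := by
    calc (2:ℝ) ^ ((1:ℝ) - β) < (2:ℝ) ^ (0:ℝ) :=
          Real.rpow_lt_rpow_left_iff (by norm_num) |>.mpr (by linarith)
      _ = 1 := Real.rpow_zero 2
  have hx2 : (2:ℝ) ^ ((2:ℝ) - β) < 1 := by
    calc (2:ℝ) ^ ((2:ℝ) - β) < (2:ℝ) ^ (0:ℝ) :=
          Real.rpow_lt_rpow_left_iff (by norm_num) |>.mpr (by linarith)
      _ = 1 := Real.rpow_zero 2
  have hx1p : (0:ℝ) < 2 ^ ((1:ℝ) - β) := Real.rpow_pos_of_pos (by norm_num) _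
  have hx2p : (0:ℝ) < 2 ^ ((2:ℝ) - β) := Real.rpow_pos_of_pos (by norm_num) _
  have hd1 : (0:ℝ) < 1 - 2 ^ ((1:ℝ) - β) := by linarith
  have hd2 : (0:ℝ) < 1 - 2 ^ ((2:ℝ) - β) := by linarith
  set K1 : ℝ := C * 2 ^ (1:ℕ) / (1 - 2 ^ ((1:ℝ) - β)) with hK1
  set K2 : ℝ := C * 2 ^ (2:ℕ) / (1 - 2 ^ ((2:ℝ) - β)) with hK2
  have hK1p : 0 < K1 := div_pos (by positivity) hd1
  have hK2p : 0 < K2 := div_pos (by positivity) hd2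
  refine ⟨2 * K1 * K2, by positivity, ?_⟩
  intro M hM
  have hM0 : (0:ℝ) < M := by exact_mod_cast hM
  obtain ⟨hGs, hGb⟩ := tail_moment r p hp hsum C β hC htail 1 (by push_cast; linarith) M hM
  obtain ⟨hHs, hHb⟩ := tail_moment r p hp hsum C β hC htail 2 (by push_cast; linarith) M hM
  set g : ℕ → ℝ := fun k => if (M:ℝ) ≤ (r k:ℝ) then (r k:ℝ) ^ (1:ℕ) * p k else 0 with hg
  set h : ℕ → ℝ := fun k => if (M:ℝ) ≤ (r k:ℝ) then (r k:ℝ) ^ (2:ℕ) * p k else 0 with hh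
  set G : ℝ := ∑' k, g k with hGdef
  set H : ℝ := ∑' k, h k with hHdef
  have hg0 : ∀ k, 0 ≤ g k := by
    intro k; rw [hg]; dsimp only; split
    · exact mul_nonneg (by positivity) (hp k)
    · exact le_rfl
  have hh0 : ∀ k, 0 ≤ h k := by
    intro k; rw [hh]; dsimp only; split
    · exact mul_nonneg (by positivity) (hp k)
    · exact le_rfl
  have hG0 : 0 ≤ G := tsum_nonneg hg0
  have hH0 : 0 ≤ H := tsum_nonneg hh0
  have hterm : ∀ k l, (if (M:ℝ) ≤ (r k:ℝ) ∧ (M:ℝ) ≤ (r l:ℝ) then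
      (r k:ℝ) * (r l:ℝ) * ((r k:ℝ) + (r l:ℝ)) * p k * p l else 0)
      = h k * g l + g k * h l := by
    intro k l
    simp only [hg, hh]
    by_cases hk : (M:ℝ) ≤ (r k:ℝ) <;> by_cases hl : (M:ℝ) ≤ (r l:ℝ)
    · rw [if_pos ⟨hk, hl⟩, if_pos hk, if_pos hl, if_pos hk, if_pos hl]; ring
    · rw [if_neg (fun hc => hl hc.2), if_neg hl, if_neg hl]; ring
    · rw [if_neg (fun hc => hk hc.1), if_neg hk, if_neg hk]; ring
    · rw [if_neg (fun hc => hk hc.1), if_neg hk, if_neg hk]; ring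
  have hinner : ∀ k, (∑' l, if (M:ℝ) ≤ (r k:ℝ) ∧ (M:ℝ) ≤ (r l:ℝ) then
      (r k:ℝ) * (r l:ℝ) * ((r k:ℝ) + (r l:ℝ)) * p k * p l else 0)
      = h k * G + g k * H := by
    intro k
    have he : (fun l => if (M:ℝ) ≤ (r k:ℝ) ∧ (M:ℝ) ≤ (r l:ℝ) then
        (r k:ℝ) * (r l:ℝ) * ((r k:ℝ) + (r l:ℝ)) * p k * p l else 0)
        = fun l => h k * g l + g k * h l := funext (hterm k)
    rw [he, Summable.tsum_add (hGs.mul_left (h k)) (hHs.mul_left (g k)),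
      tsum_mul_left, tsum_mul_left]
  have houter : (∑' k, ∑' l, if (M:ℝ) ≤ (r k:ℝ) ∧ (M:ℝ) ≤ (r l:ℝ) then
      (r k:ℝ) * (r l:ℝ) * ((r k:ℝ) + (r l:ℝ)) * p k * p l else 0)
      = H * G + G * H := by
    calc (∑' k, ∑' l, if (M:ℝ) ≤ (r k:ℝ) ∧ (M:ℝ) ≤ (r l:ℝ) then
        (r k:ℝ) * (r l:ℝ) * ((r k:ℝ) + (r l:ℝ)) * p k * p l else 0)
        = ∑' k, (h k * G + g k * H) := tsum_congr hinner
      _ = (∑' k, h k * G) + ∑' k, g k * H :=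
          Summable.tsum_add (hHs.mul_right G) (hGs.mul_right H)
      _ = H * G + G * H := by rw [tsum_mul_right, tsum_mul_right]
  rw [houter]
  have hc1 : ((1:ℕ):ℝ) = (1:ℝ) := Nat.cast_one
  have hc2 : ((2:ℕ):ℝ) = (2:ℝ) := by norm_num
  have hGb' : G ≤ K1 * (M:ℝ) ^ ((1:ℝ) - β) := by
    rw [hGdef, hK1]
    rw [hc1] at hGb
    exact hGb
  have hHb' : H ≤ K2 * (M:ℝ) ^ ((2:ℝ) - β) := by
    rw [hHdef, hK2]
    rw [hc2] at hHb
    exact hHb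
  have hB1 : 0 ≤ K1 * (M:ℝ) ^ ((1:ℝ) - β) := by positivity
  have hB2 : 0 ≤ K2 * (M:ℝ) ^ ((2:ℝ) - β) := by positivity
  have hGH : G * H ≤ (K1 * (M:ℝ) ^ ((1:ℝ) - β)) * (K2 * (M:ℝ) ^ ((2:ℝ) - β)) :=
    mul_le_mul hGb' hHb' hH0 hB1
  have hrpow : (M:ℝ) ^ ((1:ℝ) - β) * (M:ℝ) ^ ((2:ℝ) - β) = (M:ℝ) ^ (3 - 2*β) := by
    rw [← Real.rpow_add hM0]; ring_nf
  calc H * G + G * H = 2 * (G * H) := by ring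
    _ ≤ 2 * ((K1 * (M:ℝ) ^ ((1:ℝ) - β)) * (K2 * (M:ℝ) ^ ((2:ℝ) - β))) := by linarith
    _ = 2 * K1 * K2 * ((M:ℝ) ^ ((1:ℝ) - β) * (M:ℝ) ^ ((2:ℝ) - β)) := by ring
    _ = 2 * K1 * K2 * (M:ℝ) ^ (3 - 2*β) := by rw [hrpow]
end

section
/- For a Pomeau–Manneville map F(x) = x(1 + 2^α x^α) on [0,1/2] and 2x - 1 on (1/2,1], with 0 < α < 1, the first return time r of points in Y = (1/2, 1] to Y under F satisfies the tail bound: Leb(x ∈ Y : r(x) > n) = O(n^{-1/α}). In particular, if α < 1/2 the tail exponent β = 1/α satisfies β > 2. -/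
/-!
Along the left branch the quantity `y ^ (-α)` drops by at least `2 ^ α - 1` per step: with
`t = (2y) ^ α ∈ (0, 1]` one has `F y = y (1 + t)`, and `(1 + t) ^ (-α) ≤ 1 - t + t 2 ^ (-α)`
(since `1 + t ≥ 2 ^ t` and `s ↦ 2 ^ (-α s)` is convex) together with `y ^ (-α) t = 2 ^ α` gives
`y ^ (-α) - (F y) ^ (-α) ≥ 2 ^ α - 1`. A point `x ∈ Y` that does not return within `n` steps
sends `y = 2x - 1` on `n` consecutive steps through `(0, 1/2]`, so `n (2 ^ α - 1) ≤ y ^ (-α)`,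
and `x` lies in an interval of length `O(n ^ (-1/α))` at the left end of `Y`.
-/

open MeasureTheory

/-- The Pomeau–Manneville map with parameter `α`. -/
noncomputable def pmMap (α : ℝ) (x : ℝ) : ℝ :=
  if x ≤ 1 / 2 then x * (1 + 2 ^ α * x ^ α) else 2 * x - 1

open Set

theorem apply_iterate_add_mul_le {X : Type*} {f : X → X} {u : X → ℝ} {S : Set X} {c : ℝ}
    (hu : ∀ x ∈ S, u (f x) + c ≤ u x) {x : X} {n : ℕ} (hx : ∀ m < n, f^[m] x ∈ S) :
    u (f^[n] x) + n * c ≤ u x := by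
  induction n with
  | zero => simp
  | succ n ih =>
    have hstep := hu _ (hx n n.lt_succ_self)
    have hprev := ih fun m hm ↦ hx m (hm.trans n.lt_succ_self)
    rw [Function.iterate_succ_apply']
    push_cast
    linarith

theorem one_add_rpow_neg_le {p t : ℝ} (hp : 0 ≤ p) (ht₀ : 0 ≤ t) (ht₁ : t ≤ 1) :
    (1 + t) ^ (-p) ≤ 1 - t + t * 2 ^ (-p) := by
  have hconv := (convexOn_rpow_left (b := 2 ^ (-p)) (by positivity)).2 (mem_univ 0) (mem_univ 1)
    (sub_nonneg.2 ht₁) ht₀ (sub_add_cancel 1 t)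
  simp only [smul_eq_mul, mul_zero, mul_one, zero_add, Real.rpow_zero, Real.rpow_one] at hconv
  calc (1 + t) ^ (-p) ≤ ((1 + 1) ^ t) ^ (-p) :=
        Real.rpow_le_rpow_of_nonpos (by positivity)
          (by simpa using rpow_one_add_le_one_add_mul_self (s := 1) (by norm_num) ht₀ ht₁)
          (neg_nonpos.2 hp)
    _ = (2 ^ (-p)) ^ t := by
        rw [one_add_one_eq_two, ← Real.rpow_mul zero_le_two, ← Real.rpow_mul zero_le_two, mul_comm]
    _ ≤ 1 - t + t * 2 ^ (-p) := hconv

section PomeauManneville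

variable {α : ℝ}

theorem pmMap_of_le {x : ℝ} (hx₀ : 0 ≤ x) (hx : x ≤ 1 / 2) :
    pmMap α x = x * (1 + (2 * x) ^ α) := by
  rw [pmMap, if_pos hx, Real.mul_rpow zero_le_two hx₀]

theorem pmMap_of_gt {x : ℝ} (hx : 1 / 2 < x) : pmMap α x = 2 * x - 1 := by
  rw [pmMap, if_neg hx.not_ge]

theorem mapsTo_pmMap (hα : 0 ≤ α) : MapsTo (pmMap α) (Ioc 0 1) (Ioc 0 1) := by
  rintro x ⟨hx₀, hx₁⟩
  rcases le_or_gt x (1 / 2) with hx | hx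
  · have hpow : (2 * x) ^ α ≤ 1 := Real.rpow_le_one (by positivity) (by linarith) hα
    rw [mem_Ioc, pmMap_of_le hx₀.le hx]
    constructor
    · positivity
    · nlinarith
  · rw [mem_Ioc, pmMap_of_gt hx]
    constructor <;> linarith

theorem pmMap_rpow_neg_add_le (hα : 0 < α) {y : ℝ} (hy : y ∈ Ioc 0 (1 / 2)) :
    pmMap α y ^ (-α) + (2 ^ α - 1) ≤ y ^ (-α) := by
  obtain ⟨hy₀, hy₁⟩ := hy
  set t := (2 * y) ^ α with ht
  have ht₁ : t ≤ 1 := Real.rpow_le_one (by positivity) (by linarith) hα.le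
  have hyt : y ^ (-α) * t = 2 ^ α := by
    rw [ht, Real.mul_rpow zero_le_two hy₀.le, Real.rpow_neg hy₀.le]
    field_simp
  have h2_mul : 2 ^ α * 2 ^ (-α) = (1 : ℝ) := by
    rw [← Real.rpow_add zero_lt_two, add_neg_cancel, Real.rpow_zero]
  calc pmMap α y ^ (-α) + (2 ^ α - 1) = y ^ (-α) * (1 + t) ^ (-α) + (2 ^ α - 1) := by
        rw [pmMap_of_le hy₀.le hy₁, Real.mul_rpow hy₀.le (by positivity)]
    _ ≤ y ^ (-α) * (1 - t + t * 2 ^ (-α)) + (2 ^ α - 1) := by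
        gcongr
        exact one_add_rpow_neg_le hα.le (by positivity) ht₁
    _ = y ^ (-α) := by linear_combination (2 ^ (-α) - 1) * hyt + h2_mul

theorem mul_le_rpow_neg_of_iterate_mem (hα : 0 < α) {y : ℝ} (hy : y ∈ Ioc 0 1) {n : ℕ}
    (hleft : ∀ m < n, (pmMap α)^[m] y ∈ Ioc 0 (1 / 2)) :
    n * (2 ^ α - 1) ≤ y ^ (-α) := by
  have hdrop := apply_iterate_add_mul_le (u := fun z ↦ z ^ (-α))
    (fun z hz ↦ pmMap_rpow_neg_add_le hα hz) hleft
  have hlast : 0 ≤ (pmMap α)^[n] y ^ (-α) :=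
    Real.rpow_nonneg ((mapsTo_pmMap hα.le).iterate n hy).1.le _
  linarith

theorem two_mul_sub_one_le_of_forall_iterate_notMem (hα : 0 < α) {n : ℕ} (hn : 1 ≤ n) {x : ℝ}
    (hx : x ∈ Ioc (1 / 2) 1) (hret : ∀ m : ℕ, 1 ≤ m → m ≤ n → (pmMap α)^[m] x ∉ Ioc (1 / 2) 1) :
    2 * x - 1 ≤ (n * (2 ^ α - 1)) ^ (-(1 / α)) := by
  have hmaps := (mapsTo_pmMap hα.le).iterate
  have hx₀₁ : x ∈ Ioc 0 1 := ⟨by linarith [hx.1], hx.2⟩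
  have hshift : ∀ m, (pmMap α)^[m] (2 * x - 1) = (pmMap α)^[m + 1] x := fun m ↦ by
    rw [Function.iterate_succ_apply, pmMap_of_gt hx.1]
  have hleft : ∀ m < n, (pmMap α)^[m] (2 * x - 1) ∈ Ioc 0 (1 / 2) := fun m hm ↦ by
    obtain ⟨h₀, h₁⟩ := hmaps (m + 1) hx₀₁
    rw [hshift]
    exact ⟨h₀, not_lt.1 fun h ↦ hret (m + 1) (by omega) (by omega) ⟨h, h₁⟩⟩
  have hy : 2 * x - 1 ∈ Ioc 0 1 := pmMap_of_gt hx.1 ▸ mapsTo_pmMap hα.le hx₀₁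
  have hc : 0 < (2 : ℝ) ^ α - 1 := sub_pos.2 (Real.one_lt_rpow one_lt_two hα)
  rw [one_div, ← inv_neg, Real.le_rpow_inv_iff_of_neg hy.1 (by positivity) (by linarith)]
  exact mul_le_rpow_neg_of_iterate_mem hα hy hleft

end PomeauManneville

theorem pomeau_manneville_return_tail_general (α : ℝ) (hα₀ : 0 < α) :
    ∃ C : ℝ, 0 < C ∧ ∀ n : ℕ, 1 ≤ n →
      (volume {x : ℝ | x ∈ Set.Ioc (1/2 : ℝ) 1 ∧
        ∀ m : ℕ, 1 ≤ m → m ≤ n → (pmMap α)^[m] x ∉ Set.Ioc (1/2 : ℝ) 1}).toReal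
        ≤ C * (n : ℝ) ^ (-(1 / α)) := by
  set c : ℝ := 2 ^ α - 1
  have hc : 0 < c := sub_pos.2 (Real.one_lt_rpow one_lt_two hα₀)
  refine ⟨c ^ (-(1 / α)) / 2, by positivity, fun n hn ↦ ?_⟩
  set B := ((n : ℝ) * c) ^ (-(1 / α)) with hB
  have hB₀ : 0 ≤ B := by positivity
  calc volume.real _ ≤ volume.real (Ioc (1 / 2 : ℝ) (1 / 2 + B / 2)) :=
        measureReal_mono (by
          rintro x ⟨hx, hret⟩
          exact ⟨hx.1, by linarith [two_mul_sub_one_le_of_forall_iterate_notMem hα₀ hn hx hret]⟩)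
          measure_Ioc_lt_top.ne
    _ = B / 2 := by rw [Real.volume_real_Ioc_of_le (by linarith)]; ring
    _ = c ^ (-(1 / α)) / 2 * (n : ℝ) ^ (-(1 / α)) := by
        rw [hB, Real.mul_rpow (Nat.cast_nonneg n) hc.le]; ring

/-- Tail bound for the first return time of the Pomeau–Manneville map to
`Y = (1/2, 1]`: `Leb(x ∈ Y : r(x) > n) = O(n^{-1/α})`. -/
theorem pomeau_manneville_return_tail (α : ℝ) (hα₀ : 0 < α) (hα₁ : α < 1) :
    ∃ C : ℝ, 0 < C ∧ ∀ n : ℕ, 1 ≤ n →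
      (volume {x : ℝ | x ∈ Set.Ioc (1/2 : ℝ) 1 ∧
        ∀ m : ℕ, 1 ≤ m → m ≤ n → (pmMap α)^[m] x ∉ Set.Ioc (1/2 : ℝ) 1}).toReal
        ≤ C * (n : ℝ) ^ (-(1 / α)) :=
  pomeau_manneville_return_tail_general α hα₀
end
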